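/- Let ℓ ≥ 1 and let A₁, …, A_ℓ be k-balanced k-uniform hypergraphs with k-density at least ρ, such that for all 2 ≤ i ≤ ℓ, the hypergraph A_i shares an edge with S_{i−1} := A₁ + … + A_{i−1}. Let S := A₁ + … + A_ℓ. Then either max over subgraphs B ⊆ S of e(B)/v(B) ≥ ρ, or the template (S, ∅) is strictly balanced. -/
import Mathlib


open Finset

/-- The vertex set (support) of a hypergraph given by its edge set. -/
def verts (A : Finset (Finset ℕ)) : Finset ℕ := A.sup id

/-- The edge set of the induced subhypergraph `A[U]`. -/
def ind (A : Finset (Finset ℕ)) (U : Finset ℕ) : Finset (Finset ℕ) := A.filter (· ⊆ U)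

/-- The density of the template `(A[U], I)`, where `A[U]` carries the vertex set `U`:
`(e(A[U]) - e(A[I])) / (|U| - |I|)`, and `0` if `U = I`. -/
def dens (A : Finset (Finset ℕ)) (U I : Finset ℕ) : ℚ :=
  if U = I then 0
  else (((ind A U).card : ℚ) - ((ind A I).card : ℚ)) / ((U.card : ℚ) - (I.card : ℚ))

/-- The density `ρ_{A,I}` of the template `(A, I)` (whose vertex set is `verts A ∪ I`). -/
def tdens (A : Finset (Finset ℕ)) (I : Finset ℕ) : ℚ := dens A (verts A ∪ I) I

/-- The `k`-density `ρ_A = (e(A) - 1)/(v(A) - k)` of a `k`-uniform hypergraph. -/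
def kdens (k : ℕ) (A : Finset (Finset ℕ)) : ℚ :=
  ((A.card : ℚ) - 1) / (((verts A).card : ℚ) - (k : ℚ))

/-- The template `(A, I)` is strictly balanced: every proper subtemplate `(B, I) ⊆ (A, I)`
(`B = A[U]` with vertex set `U`, `I ⊆ U`, `V(B) = U ≠ I`, `B ≠ A`) has strictly smaller
density. -/
def StrictBalT (A : Finset (Finset ℕ)) (I : Finset ℕ) : Prop :=
  ∀ U : Finset ℕ, I ⊆ U → U ⊂ verts A ∪ I → U ≠ I → dens A U I < tdens A I

/-- `A` is `k`-balanced: it has an edge, and every subgraph on at least `k+1` vertices has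
`k`-density at most that of `A`. -/
def KBalanced (k : ℕ) (A : Finset (Finset ℕ)) : Prop :=
  A.Nonempty ∧ ∀ G ⊆ A, k + 1 ≤ (verts G).card → kdens k G ≤ kdens k A

lemma mem_ind {A : Finset (Finset ℕ)} {U e : Finset ℕ} :
    e ∈ ind A U ↔ e ∈ A ∧ e ⊆ U := by simp [ind]

lemma ind_sub (A : Finset (Finset ℕ)) (U : Finset ℕ) : ind A U ⊆ A := filter_subset _ _

lemma verts_mono' {A B : Finset (Finset ℕ)} (h : A ⊆ B) : verts A ⊆ verts B :=
  le_iff_subset.mp (Finset.sup_mono h)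

lemma subset_verts' {A : Finset (Finset ℕ)} {e : Finset ℕ} (h : e ∈ A) : e ⊆ verts A :=
  Finset.le_sup (f := id) h

lemma verts_union' (A B : Finset (Finset ℕ)) : verts (A ∪ B) = verts A ∪ verts B :=
  Finset.sup_union

lemma verts_ind_sub (A : Finset (Finset ℕ)) (U : Finset ℕ) : verts (ind A U) ⊆ U :=
  Finset.sup_le fun _ he => (mem_ind.1 he).2

lemma ind_union' (A B : Finset (Finset ℕ)) (U : Finset ℕ) :
    ind (A ∪ B) U = ind A U ∪ ind B U := filter_union _ _ _

lemma k_le_verts {k : ℕ} {G : Finset (Finset ℕ)} (hu : ∀ e ∈ G, e.card = k)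
    (hne : G.Nonempty) : k ≤ (verts G).card := by
  obtain ⟨e, he⟩ := hne
  calc k = e.card := (hu e he).symm
    _ ≤ _ := card_le_card (subset_verts' he)

lemma card_eq_one_of_verts {k : ℕ} {G : Finset (Finset ℕ)} (hu : ∀ e ∈ G, e.card = k)
    (hne : G.Nonempty) (hv : (verts G).card ≤ k) : G.card = 1 := by
  have h1 : ∀ e ∈ G, e = verts G := fun e he =>
    Finset.eq_of_subset_of_card_le (subset_verts' he) (le_trans hv (hu e he).ge)
  obtain ⟨e, he⟩ := hne
  have hG : G = {verts G} := by
    apply Finset.eq_singleton_iff_unique_mem.2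
    exact ⟨h1 e he ▸ he, fun x hx => h1 x hx⟩
  rw [hG, Finset.card_singleton]

lemma bal_bound {k : ℕ} {Af G : Finset (Finset ℕ)} (hbal : KBalanced k Af)
    (hu : ∀ e ∈ Af, e.card = k) (hG : G ⊆ Af) (hne : G.Nonempty) :
    (G.card : ℚ) ≤ 1 + kdens k Af * (((verts G).card : ℚ) - k) := by
  have huG : ∀ e ∈ G, e.card = k := fun e he => hu e (hG he)
  have hkv : k ≤ (verts G).card := k_le_verts huG hne
  rcases eq_or_lt_of_le hkv with h | h
  · have h1 : G.card = 1 := card_eq_one_of_verts huG hne h.ge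
    have h2 : ((verts G).card : ℚ) - k = 0 := by rw [← h]; ring
    rw [h1, h2]; norm_num
  · have hd := hbal.2 G hG h
    have hpos : (0:ℚ) < ((verts G).card : ℚ) - k := by
      have : (k:ℚ) < ((verts G).card : ℚ) := by exact_mod_cast h
      linarith
    rw [kdens, div_le_iff₀ hpos] at hd
    nlinarith [hd]

lemma bal_exact {k : ℕ} {Af : Finset (Finset ℕ)} (hu : ∀ e ∈ Af, e.card = k)
    (hne : Af.Nonempty) :
    (Af.card : ℚ) = 1 + kdens k Af * (((verts Af).card : ℚ) - k) := by
  have hkv : k ≤ (verts Af).card := k_le_verts hu hne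
  rcases eq_or_lt_of_le hkv with h | h
  · have h1 : Af.card = 1 := card_eq_one_of_verts hu hne h.ge
    have h2 : ((verts Af).card : ℚ) - k = 0 := by rw [← h]; ring
    rw [h1, h2]; norm_num
  · have hpos : (0:ℚ) < ((verts Af).card : ℚ) - k := by
      have : (k:ℚ) < ((verts Af).card : ℚ) := by exact_mod_cast h
      linarith
    rw [kdens, div_mul_cancel₀ _ hpos.ne']; ring

lemma ind_edge {k : ℕ} {G : Finset (Finset ℕ)} {f : Finset ℕ}
    (hu : ∀ e ∈ G, e.card = k) (hf : f ∈ G) : ind G f = {f} := by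
  ext e
  simp only [mem_ind, Finset.mem_singleton]
  constructor
  · rintro ⟨heG, hef⟩
    exact Finset.eq_of_subset_of_card_le hef (by rw [hu e heG, hu f hf])
  · rintro rfl; exact ⟨hf, Finset.Subset.refl _⟩

lemma verts_singleton (f : Finset ℕ) : verts ({f} : Finset (Finset ℕ)) = f := by simp [verts]

set_option maxHeartbeats 2000000 in
lemma keyL (k : ℕ) (ρ : ℚ) (hρ : 0 < ρ) (A : ℕ → Finset (Finset ℕ)) :
    ∀ ℓ : ℕ, 1 ≤ ℓ →
    (∀ i < ℓ, ∀ e ∈ A i, e.card = k) →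
    (∀ i < ℓ, KBalanced k (A i)) →
    (∀ i < ℓ, ρ ≤ kdens k (A i)) →
    (∀ i, 1 ≤ i → i < ℓ → (((Finset.range i).biUnion A) ∩ A i).Nonempty) →
    ∀ U : Finset ℕ, (ind ((Finset.range ℓ).biUnion A) U).Nonempty →
      ρ * (((verts ((Finset.range ℓ).biUnion A)).card : ℚ)
          - ((verts (ind ((Finset.range ℓ).biUnion A) U)).card : ℚ))
        ≤ ((((Finset.range ℓ).biUnion A).card : ℚ)
          - ((ind ((Finset.range ℓ).biUnion A) U).card : ℚ)) := by
  intro ℓ hℓ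
  induction ℓ, hℓ using Nat.le_induction with
  | base =>
    intro hunif hbal hdens _ U hne
    have hS : (Finset.range 1).biUnion A = A 0 := by simp
    rw [hS] at hne ⊢
    have hu := hunif 0 one_pos
    have hb := hbal 0 one_pos
    have hd := hdens 0 one_pos
    have q5 := bal_bound hb hu (ind_sub (A 0) U) hne
    have q6 := bal_exact hu hb.1
    have hvBS : ((verts (ind (A 0) U)).card : ℚ) ≤ ((verts (A 0)).card : ℚ) := by
      exact_mod_cast card_le_card (verts_mono' (ind_sub (A 0) U))
    nlinarith [mul_nonneg (sub_nonneg.2 hd) (sub_nonneg.2 hvBS)]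
  | succ n hn IH =>
    intro hunif hbal hdens hshare U hne
    set S' := (Finset.range n).biUnion A with hS'
    set An := A n with hAn
    have hSS : (Finset.range (n+1)).biUnion A = S' ∪ An := by
      rw [Finset.range_add_one, Finset.biUnion_insert, union_comm]
    rw [hSS] at hne ⊢
    have hunif' : ∀ i < n, ∀ e ∈ A i, e.card = k := fun i hi => hunif i (by omega)
    have hbal' : ∀ i < n, KBalanced k (A i) := fun i hi => hbal i (by omega)
    have hdens' : ∀ i < n, ρ ≤ kdens k (A i) := fun i hi => hdens i (by omega)
    have hshare' : ∀ i, 1 ≤ i → i < n → (((Finset.range i).biUnion A) ∩ A i).Nonempty :=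
      fun i h1 h2 => hshare i h1 (by omega)
    have IH' := IH hunif' hbal' hdens' hshare'
    have huS' : ∀ e ∈ S', e.card = k := by
      intro e he
      obtain ⟨i, hi, hei⟩ := Finset.mem_biUnion.1 he
      exact hunif' i (Finset.mem_range.1 hi) e hei
    have huAn : ∀ e ∈ An, e.card = k := hunif n (by omega)
    have hbAn : KBalanced k An := hbal n (by omega)
    have q10 : ρ ≤ kdens k An := hdens n (by omega)
    set C := S' ∩ An with hC
    have hCne : C.Nonempty := hshare n hn (by omega)
    set B := ind (S' ∪ An) U with hBdef
    set B' := ind S' U with hB'def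
    set BA := ind An U with hBAdef
    have hB : B = B' ∪ BA := ind_union' S' An U
    -- edge count identities (ℕ)
    have qa : (S' ∪ An).card + C.card = S'.card + An.card := card_union_add_card_inter _ _
    set W := verts S' ∩ verts An with hW
    have qb : (verts (S' ∪ An)).card + W.card = (verts S').card + (verts An).card := by
      rw [verts_union']; exact card_union_add_card_inter _ _
    have qaQ : ((S' ∪ An).card : ℚ) + C.card = S'.card + An.card := by exact_mod_cast qa
    have qbQ : ((verts (S' ∪ An)).card : ℚ) + W.card
        = (verts S').card + (verts An).card := by exact_mod_cast qb
    by_cases hB' : B'.Nonempty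
    · -- Case 1 : B' has an edge
      set D := BA ∪ C with hD
      have hDsub : D ⊆ An := union_subset (ind_sub An U) inter_subset_right
      have hDne : D.Nonempty := hCne.mono subset_union_right
      have q5 := bal_bound hbAn huAn hDsub hDne
      have q6 := bal_exact huAn hbAn.1
      have q7 := IH' U hB'
      have qc : B.card + (B' ∩ BA).card = B'.card + BA.card := by
        rw [hB]; exact card_union_add_card_inter _ _
      have qd : D.card + (BA ∩ C).card = BA.card + C.card := card_union_add_card_inter _ _
      have qe : B' ∩ BA = BA ∩ C := by
        ext e
        simp only [hB'def, hBAdef, hC, Finset.mem_inter, mem_ind]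
        tauto
      have q8 : (verts D).card + (verts B').card ≤ W.card + (verts B).card := by
        have h1 : verts D ∪ verts B' ⊆ W ∪ verts B := by
          rw [hD, verts_union']
          apply union_subset (union_subset ?_ ?_) ?_
          · exact (verts_mono' (hB ▸ subset_union_right : BA ⊆ B)).trans subset_union_right
          · exact (subset_inter (verts_mono' inter_subset_left)
              (verts_mono' inter_subset_right)).trans subset_union_left
          · exact (verts_mono' (hB ▸ subset_union_left : B' ⊆ B)).trans subset_union_right
        have h2 : verts D ∩ verts B' ⊆ W ∩ verts B := by
          intro x hx
          obtain ⟨hxD, hxB'⟩ := Finset.mem_inter.1 hx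
          have hxAn : x ∈ verts An := verts_mono' hDsub hxD
          have hxS' : x ∈ verts S' := verts_mono' (ind_sub S' U) hxB'
          have hxB : x ∈ verts B := verts_mono' (hB ▸ subset_union_left : B' ⊆ B) hxB'
          exact Finset.mem_inter.2 ⟨Finset.mem_inter.2 ⟨hxS', hxAn⟩, hxB⟩
        calc (verts D).card + (verts B').card
            = (verts D ∪ verts B').card + (verts D ∩ verts B').card :=
              (card_union_add_card_inter _ _).symm
          _ ≤ (W ∪ verts B).card + (W ∩ verts B).card :=
              add_le_add (card_le_card h1) (card_le_card h2)
          _ = W.card + (verts B).card := card_union_add_card_inter _ _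
      have q9 : ((verts D).card : ℚ) ≤ ((verts An).card : ℚ) := by
        exact_mod_cast card_le_card (verts_mono' hDsub)
      have qcQ : (B.card : ℚ) + ((B' ∩ BA).card : ℚ) = (B'.card : ℚ) + BA.card := by
        exact_mod_cast qc
      have qdQ : (D.card : ℚ) + ((B' ∩ BA).card : ℚ) = (BA.card : ℚ) + C.card := by
        rw [qe]; exact_mod_cast qd
      have q8Q : ((verts D).card : ℚ) + (verts B').card ≤ (W.card : ℚ) + (verts B).card := by
        exact_mod_cast q8
      have hAD : ρ * (((verts An).card : ℚ) - (verts D).card)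
          ≤ (An.card : ℚ) - D.card := by
        nlinarith [q5, q6, mul_nonneg (sub_nonneg.2 q10) (sub_nonneg.2 q9)]
      have hv : ((verts (S' ∪ An)).card : ℚ) - (verts B).card
          ≤ (((verts S').card : ℚ) - (verts B').card)
            + (((verts An).card : ℚ) - (verts D).card) := by
        linarith [qbQ, q8Q]
      have hmul := mul_le_mul_of_nonneg_left hv hρ.le
      rw [mul_add] at hmul
      linarith [q7, hAD, hmul, qaQ, qcQ, qdQ]
    · -- Case 2 : B' = ∅
      have hB'e : B' = ∅ := not_nonempty_iff_eq_empty.1 hB'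
      have hBBA : B = BA := by rw [hB, hB'e, empty_union]
      have hBsub : B ⊆ An := hBBA ▸ ind_sub An U
      obtain ⟨f, hf⟩ := hCne
      have hfS' : f ∈ S' := (Finset.mem_inter.1 hf).1
      have hfAn : f ∈ An := (Finset.mem_inter.1 hf).2
      have hfk : f.card = k := huAn f hfAn
      have hindf : ind S' f = {f} := ind_edge huS' hfS'
      have q7 := IH' f (by rw [hindf]; exact Finset.singleton_nonempty f)
      rw [hindf, verts_singleton, Finset.card_singleton, hfk] at q7
      push_cast at q7
      -- q7 : ρ * (vS' - k) ≤ eS' - 1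
      have hdisj : Disjoint B C := by
        rw [Finset.disjoint_left]
        intro e heB heC
        have heU : e ⊆ U := (mem_ind.1 heB).2
        have : e ∈ B' := mem_ind.2 ⟨(Finset.mem_inter.1 heC).1, heU⟩
        rw [hB'e] at this
        exact absurd this (Finset.notMem_empty e)
      set D := B ∪ C with hD
      have hDsub : D ⊆ An := union_subset hBsub inter_subset_right
      have hDne : D.Nonempty := hne.mono subset_union_left
      have qed : D.card = B.card + C.card := card_union_of_disjoint hdisj
      have qedQ : (D.card : ℚ) = B.card + C.card := by exact_mod_cast qed
      have qv : (verts D).card + (verts B ∩ verts C).card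
          = (verts B).card + (verts C).card := by
        rw [hD, verts_union']; exact card_union_add_card_inter _ _
      have qvQ : ((verts D).card : ℚ) + ((verts B ∩ verts C).card : ℚ)
          = ((verts B).card : ℚ) + (verts C).card := by exact_mod_cast qv
      have qm : ((verts C).card : ℚ) ≤ (W.card : ℚ) := by
        exact_mod_cast card_le_card (subset_inter (verts_mono' inter_subset_left)
          (verts_mono' inter_subset_right))
      have q6 := bal_exact huAn hbAn.1
      have q9 : ((verts D).card : ℚ) ≤ ((verts An).card : ℚ) := by
        exact_mod_cast card_le_card (verts_mono' hDsub)
      rcases le_or_gt k (verts B ∩ verts C).card with ht | ht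
      · -- t ≥ k : use balancedness on D = B ⊔ C
        have q5 := bal_bound hbAn huAn hDsub hDne
        have htQ : (k : ℚ) ≤ ((verts B ∩ verts C).card : ℚ) := by exact_mod_cast ht
        have hAD : ρ * (((verts An).card : ℚ) - (verts D).card)
            ≤ (An.card : ℚ) - D.card := by
          nlinarith [q5, q6, mul_nonneg (sub_nonneg.2 q10) (sub_nonneg.2 q9)]
        have hv : ((verts (S' ∪ An)).card : ℚ) - (verts B).card
            ≤ (((verts S').card : ℚ) - k)
              + (((verts An).card : ℚ) - (verts D).card) := by
          linarith [qbQ, qvQ, qm, htQ]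
        have hmul := mul_le_mul_of_nonneg_left hv hρ.le
        rw [mul_add] at hmul
        linarith [q7, hAD, hmul, qaQ, qedQ]
      · -- t < k : use balancedness on B and C separately
        have balB := bal_bound hbAn huAn hBsub hne
        have balC := bal_bound hbAn huAn (inter_subset_right : C ⊆ An) ⟨f, hf⟩
        have htQ : ((verts B ∩ verts C).card : ℚ) ≤ (k : ℚ) := by
          exact_mod_cast ht.le
        have hco : (0:ℚ) ≤ ((verts An).card : ℚ) - (verts C).card - (verts B).card + k := by
          linarith [q9, qvQ, htQ]
        set X : ℚ := ((verts An).card : ℚ) - (verts C).card - (verts B).card + k with hXd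
        have hXb : kdens k An * X ≤ (An.card : ℚ) - C.card - B.card + 1 := by
          nlinarith [q6, balB, balC]
        have hXρ : ρ * X ≤ kdens k An * X := mul_le_mul_of_nonneg_right q10 hco
        have hv : ((verts (S' ∪ An)).card : ℚ) - (verts B).card
            ≤ (((verts S').card : ℚ) - k) + X := by
          rw [hXd]; linarith [qbQ, qm]
        have hmul := mul_le_mul_of_nonneg_left hv hρ.le
        rw [mul_add] at hmul
        linarith [q7, hXb, hXρ, hmul, qaQ]

/-- if `A₁, …, A_ℓ` are `k`-balanced `k`-graphs of `k`-density at least `ρ`, each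
sharing an edge with the union of its predecessors, and `S` is their union, then either some
subgraph `B ⊆ S` satisfies `e(B)/v(B) ≥ ρ`, or the template `(S, ∅)` is strictly balanced. -/
theorem balanced_gluing_dense_or_strictly_balanced
    (k : ℕ) (hk : 2 ≤ k) (ℓ : ℕ) (hℓ : 1 ≤ ℓ) (ρ : ℚ)
    (A : ℕ → Finset (Finset ℕ))
    (hunif : ∀ i < ℓ, ∀ e ∈ A i, e.card = k)
    (hbal : ∀ i < ℓ, KBalanced k (A i))
    (hdens : ∀ i < ℓ, ρ ≤ kdens k (A i))
    (hshare : ∀ i, 1 ≤ i → i < ℓ → ((((Finset.range i).biUnion A)) ∩ A i).Nonempty)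
    (S : Finset (Finset ℕ)) (hS : S = (Finset.range ℓ).biUnion A) :
    (∃ B ⊆ S, (verts B).Nonempty ∧ ρ ≤ (B.card : ℚ) / ((verts B).card : ℚ)) ∨
      StrictBalT S ∅ := by
  have h0 : (0:ℕ) < ℓ := hℓ
  have hA0S : A 0 ⊆ S := by
    rw [hS]; exact Finset.subset_biUnion_of_mem A (Finset.mem_range.2 h0)
  obtain ⟨e0, he0⟩ := (hbal 0 h0).1
  have he0k : e0.card = k := hunif 0 h0 e0 he0
  have he0ne : e0.Nonempty := by rw [← Finset.card_pos, he0k]; omega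
  obtain ⟨x0, hx0⟩ := he0ne
  have hx0v : x0 ∈ verts (A 0) := subset_verts' he0 hx0
  rcases le_or_gt ρ 0 with hρ | hρ
  · exact Or.inl ⟨A 0, hA0S, ⟨x0, hx0v⟩, le_trans hρ (by positivity)⟩
  by_cases hL : ∃ B ⊆ S, (verts B).Nonempty ∧ ρ ≤ (B.card : ℚ) / ((verts B).card : ℚ)
  · exact Or.inl hL
  right
  push_neg at hL
  have hSu : ∀ e ∈ S, e.card = k := by
    intro e he
    rw [hS] at he
    obtain ⟨i, hi, hei⟩ := Finset.mem_biUnion.1 he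
    exact hunif i (Finset.mem_range.1 hi) e hei
  have hSne : S.Nonempty := ⟨e0, hA0S he0⟩
  have hvSne : (verts S).Nonempty := ⟨x0, verts_mono' hA0S hx0v⟩
  have hvSpos : (0:ℚ) < ((verts S).card : ℚ) := by
    have := Finset.card_pos.2 hvSne; exact_mod_cast this
  have hSpos : (0:ℚ) < (S.card : ℚ) := by
    have := Finset.card_pos.2 hSne; exact_mod_cast this
  have hSd : (S.card : ℚ) / ((verts S).card : ℚ) < ρ := hL S Finset.Subset.rfl hvSne
  have hind0 : ind S ∅ = ∅ := by
    rw [Finset.eq_empty_iff_forall_notMem]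
    intro e he
    have h1 : e = ∅ := Finset.subset_empty.1 (mem_ind.1 he).2
    have h2 := hSu e (mem_ind.1 he).1
    rw [h1, Finset.card_empty] at h2
    omega
  have htd : tdens S ∅ = (S.card : ℚ) / ((verts S).card : ℚ) := by
    have hSind : ind S (verts S) = S :=
      Finset.filter_true_of_mem fun e he => subset_verts' he
    rw [tdens]
    unfold _root_.dens
    rw [Finset.union_empty, if_neg hvSne.ne_empty, hind0, hSind]
    simp
  intro U _ hUsub hUne
  rw [Finset.union_empty] at hUsub
  rw [htd]
  unfold _root_.dens
  rw [if_neg hUne, hind0]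
  simp only [Finset.card_empty, Nat.cast_zero, sub_zero]
  have hUpos : (0:ℚ) < (U.card : ℚ) := by
    have := Finset.card_pos.2 (Finset.nonempty_iff_ne_empty.2 hUne)
    exact_mod_cast this
  have hUlt : (U.card : ℚ) < ((verts S).card : ℚ) := by
    exact_mod_cast card_lt_card hUsub
  by_cases hBne : (ind S U).Nonempty
  · have hkey := keyL k ρ hρ A ℓ hℓ hunif hbal hdens hshare U (by rw [← hS]; exact hBne)
    rw [← hS] at hkey
    have hvBU : ((verts (ind S U)).card : ℚ) ≤ (U.card : ℚ) := by
      exact_mod_cast card_le_card (verts_ind_sub S U)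
    have hd : (S.card : ℚ) / ((verts S).card : ℚ) * ((verts S).card : ℚ) = S.card :=
      div_mul_cancel₀ _ hvSpos.ne'
    rw [div_lt_iff₀ hUpos]
    have h1 : ρ * (((verts S).card:ℚ) - U.card)
        ≤ ρ * (((verts S).card:ℚ) - (verts (ind S U)).card) :=
      mul_le_mul_of_nonneg_left (by linarith) hρ.le
    have h2 : (S.card : ℚ) / ((verts S).card : ℚ) * (((verts S).card:ℚ) - U.card)
        < ρ * (((verts S).card:ℚ) - U.card) :=
      mul_lt_mul_of_pos_right hSd (by linarith)
    nlinarith [hkey, h1, h2, hd]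
  · rw [not_nonempty_iff_eq_empty.1 hBne]
    simp only [Finset.card_empty, Nat.cast_zero]
    rw [zero_div]
    exact div_pos hSpos hvSpos
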